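/- arXiv:1504.03839 — 3 statements merged into one kernel-verified Lean document; each statement's English description precedes it below -/
import Mathlib

section
/- Let k be an even positive integer and n ≥ 2, let T be a tensor of order k and dimension n, and let S be a nonempty proper subset of {1,…,n}. Suppose λ ∈ ℝ is an H-eigenvalue of T such that T z^k ≤ λ for every z ∈ ℝ^n with Σ_{i=1}^n z_i^k = 1. Then μ ≤ λ for every H-eigenvalue μ of the principal subtensor T[S]. -/
/-! An H-eigenvector `y` of `T[S]`, extended by zero to all of `{1,…,n}`, satisfies
`T y^k = μ ∑ yᵢ^k` with `∑ yᵢ^k > 0` since `k` is even. By `k`-homogeneity the bound on the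
unit sphere gives `T y^k ≤ λ ∑ yᵢ^k`, hence `μ ≤ λ`. -/

open Finset

/-- `T x^k` for a tensor `T` of order `k` on index type `ι`:
`T x^k = Σ_{i_1,…,i_k} T(i_1,…,i_k) x_{i_1} ⋯ x_{i_k}`. -/
def tensorApply {k : ℕ} {ι : Type*} [Fintype ι] (T : (Fin k → ι) → ℝ) (x : ι → ℝ) : ℝ :=
  ∑ f : Fin k → ι, T f * ∏ j : Fin k, x (f j)

/-- The H-eigenvalue equation: for every `i`,
`Σ_{i_2,…,i_k} T(i,i_2,…,i_k) x_{i_2} ⋯ x_{i_k} = λ x_i^(k-1)`. -/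
def HEigEq {k : ℕ} {ι : Type*} [Fintype ι] [DecidableEq ι] (hk : 0 < k)
    (T : (Fin k → ι) → ℝ) (lam : ℝ) (x : ι → ℝ) : Prop :=
  ∀ i : ι,
    (∑ f : Fin k → ι,
      if f ⟨0, hk⟩ = i then T f * ∏ j ∈ Finset.univ.erase (⟨0, hk⟩ : Fin k), x (f j) else 0)
    = lam * x i ^ (k - 1)

/-- `lam` is an H-eigenvalue of the tensor `T`. -/
def IsHEig {k : ℕ} {ι : Type*} [Fintype ι] [DecidableEq ι] (hk : 0 < k)
    (T : (Fin k → ι) → ℝ) (lam : ℝ) : Prop :=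
  ∃ x : ι → ℝ, x ≠ 0 ∧ HEigEq hk T lam x

lemma tensorApply_eq_of_HEigEq {k : ℕ} {ι : Type*} [Fintype ι] [DecidableEq ι] {hk : 0 < k}
    {T : (Fin k → ι) → ℝ} {lam : ℝ} {x : ι → ℝ} (h : HEigEq hk T lam x) :
    tensorApply T x = lam * ∑ i, x i ^ k := by
  have contract : tensorApply T x = ∑ i, (∑ f : Fin k → ι,
      if f ⟨0, hk⟩ = i then T f * ∏ j ∈ univ.erase (⟨0, hk⟩ : Fin k), x (f j) else 0) * x i := by
    simp_rw [sum_mul, ite_mul, zero_mul]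
    rw [sum_comm]
    refine sum_congr rfl fun f _ => ?_
    rw [sum_ite_eq, if_pos (mem_univ _), mul_assoc, mul_comm _ (x _),
      mul_prod_erase univ (fun j => x (f j)) (mem_univ _)]
  rw [contract, mul_sum]
  refine sum_congr rfl fun i _ => ?_
  rw [h i, mul_assoc, ← pow_succ, Nat.sub_add_cancel hk]

lemma tensorApply_smul {k : ℕ} {ι : Type*} [Fintype ι] (T : (Fin k → ι) → ℝ) (c : ℝ)
    (x : ι → ℝ) : tensorApply T (c • x) = c ^ k * tensorApply T x := by
  simp only [tensorApply, mul_sum, Pi.smul_apply, smul_eq_mul, prod_mul_distrib, prod_const,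
    card_univ, Fintype.card_fin]
  exact sum_congr rfl fun f _ => by ring

/-- Every multi-index leaving the range of `e` meets a zero coordinate of the extension. -/
lemma tensorApply_extend_zero {k : ℕ} {κ ι : Type*} [Fintype κ] [Fintype ι] {e : κ → ι}
    (he : Function.Injective e) (T : (Fin k → ι) → ℝ) (y : κ → ℝ) :
    tensorApply T (Function.extend e y 0) = tensorApply (fun f => T (e ∘ f)) y := by
  refine (Fintype.sum_of_injective (e ∘ ·) he.comp_left _ _ (fun f hf => ?_) fun g => ?_).symm
  · obtain ⟨j, hj⟩ : ∃ j, ¬∃ a, e a = f j := by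
      by_contra! hall
      choose g hg using hall
      exact hf ⟨g, funext hg⟩
    rw [prod_eq_zero (mem_univ j) (Function.extend_apply' _ _ _ hj), mul_zero]
  · simp [he.extend_apply]

lemma sum_extend_zero_pow {k : ℕ} (hk : k ≠ 0) {κ ι : Type*} [Fintype κ] [Fintype ι]
    {e : κ → ι} (he : Function.Injective e) (y : κ → ℝ) :
    ∑ i, Function.extend e y 0 i ^ k = ∑ a, y a ^ k :=
  (Fintype.sum_of_injective e he _ _
    (fun i hi => by rw [Function.extend_apply' _ _ _ hi, Pi.zero_apply, zero_pow hk])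
    fun a => by rw [he.extend_apply]).symm

lemma sum_pow_pos_of_ne_zero {k : ℕ} (hke : Even k) {ι : Type*} [Fintype ι] {y : ι → ℝ}
    (hy : y ≠ 0) : 0 < ∑ i, y i ^ k := by
  obtain ⟨i, hi⟩ := Function.ne_iff.mp hy
  exact sum_pos' (fun j _ => hke.pow_nonneg (y j)) ⟨i, mem_univ _, hke.pow_pos hi⟩

/-- Homogeneity turns the bound on the unit sphere `∑ zᵢ ^ k = 1` into a global bound. -/
lemma tensorApply_le_mul_sum_pow {k : ℕ} (hk : k ≠ 0) {ι : Type*} [Fintype ι]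
    {T : (Fin k → ι) → ℝ} {lam : ℝ}
    (hmax : ∀ z : ι → ℝ, ∑ i, z i ^ k = 1 → tensorApply T z ≤ lam)
    {x : ι → ℝ} (hx : 0 < ∑ i, x i ^ k) : tensorApply T x ≤ lam * ∑ i, x i ^ k := by
  set s := ∑ i, x i ^ k
  have hck : ((s⁻¹) ^ ((k : ℝ)⁻¹)) ^ k = s⁻¹ := Real.rpow_inv_natCast_pow (by positivity) hk
  have hz : ∑ i, ((s⁻¹ ^ ((k : ℝ)⁻¹)) • x) i ^ k = 1 := by
    simp only [Pi.smul_apply, smul_eq_mul, mul_pow, ← mul_sum, hck]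
    exact inv_mul_cancel₀ hx.ne'
  have := hmax _ hz
  rw [tensorApply_smul, hck, inv_mul_le_iff₀ hx] at this
  linarith

theorem stmt1_general (k n : ℕ) (hk : 0 < k) (hke : Even k)
    (T : (Fin k → Fin n) → ℝ)
    (S : Finset (Fin n))
    (lam : ℝ)
    (hmax : ∀ z : Fin n → ℝ, (∑ i : Fin n, z i ^ k) = 1 → tensorApply T z ≤ lam)
    (mu : ℝ)
    (hmu : IsHEig hk (fun f : Fin k → {i : Fin n // i ∈ S} => T (fun j => (f j : Fin n))) mu) :
    mu ≤ lam := by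
  obtain ⟨y, hy, heig⟩ := hmu
  have hs := sum_pow_pos_of_ne_zero hke hy
  have hx := (sum_extend_zero_pow hk.ne' Subtype.val_injective y).symm
  refine le_of_mul_le_mul_right ?_ hs
  calc mu * ∑ i, y i ^ k
      = tensorApply (fun f : Fin k → {i : Fin n // i ∈ S} => T (fun j => (f j : Fin n))) y := by
        rw [tensorApply_eq_of_HEigEq heig, mul_comm]
    _ = tensorApply T (Function.extend Subtype.val y 0) :=
        (tensorApply_extend_zero Subtype.val_injective T y).symm
    _ ≤ lam * ∑ i, y i ^ k := by
        rw [hx]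
        exact tensorApply_le_mul_sum_pow hk.ne' hmax (hx ▸ hs)

/-- STATEMENT 0: if `k` is even and positive, `n ≥ 2`, `λ` is an H-eigenvalue of `T` with
`T z^k ≤ λ` for all `z` with `Σ z_i^k = 1`, then `μ ≤ λ` for every H-eigenvalue `μ` of the
principal subtensor `T[S]`, where `S` is a nonempty proper subset of the index set. -/
theorem stmt1 (k n : ℕ) (hk : 0 < k) (hke : Even k) (hn : 2 ≤ n)
    (T : (Fin k → Fin n) → ℝ)
    (S : Finset (Fin n)) (hS : S.Nonempty) (hSne : S ≠ Finset.univ)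
    (lam : ℝ) (hlam : IsHEig hk T lam)
    (hmax : ∀ z : Fin n → ℝ, (∑ i : Fin n, z i ^ k) = 1 → tensorApply T z ≤ lam)
    (mu : ℝ)
    (hmu : IsHEig hk (fun f : Fin k → {i : Fin n // i ∈ S} => T (fun j => (f j : Fin n))) mu) :
    mu ≤ lam :=
  stmt1_general k n hk hke T S lam hmax mu hmu
end

section
/- Let G be a finite simple graph, let k ≥ 4 be an even integer with s = k/2, and suppose λ ≠ 0 is an adjacency H-eigenvalue of the generalized power hypergraph G^{k,k/2} with H-eigenvector x. Let U = {v ∈ V(G) : x_{(v,i)} ≠ 0 for some i ∈ {1,…,s}}. Then every vertex of U has a neighbor in U in the graph G; that is, the induced subgraph G[U] contains no isolated vertices. -/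
open Finset

/-- The edge set of the generalized power hypergraph `G^{k, k/2}` (with `s = k/2`):
each edge `{u,v}` of `G` is blown up into the `2s`-set `({u} × Fin s) ∪ ({v} × Fin s)`. -/
def powerEdges {V : Type*} [Fintype V] [DecidableEq V] (G : SimpleGraph V)
    [DecidableRel G.Adj] (s : ℕ) : Finset (Finset (V × Fin s)) :=
  (Finset.univ.filter fun p : V × V => G.Adj p.1 p.2).image
    (fun p => ({p.1} ×ˢ (Finset.univ : Finset (Fin s)))
        ∪ ({p.2} ×ˢ (Finset.univ : Finset (Fin s))))

/-- `lam` is an adjacency H-eigenvalue of the generalized power hypergraph `G^{k,s}`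
(`k = 2s`) with H-eigenvector `x`. -/
def IsAdjHEigPow {V : Type*} [Fintype V] [DecidableEq V] (G : SimpleGraph V)
    [DecidableRel G.Adj] (k s : ℕ) (lam : ℝ) (x : V × Fin s → ℝ) : Prop :=
  x ≠ 0 ∧ ∀ p : V × Fin s,
    lam * x p ^ (k - 1)
      = ∑ e ∈ (powerEdges G s).filter (fun e => p ∈ e), ∏ w ∈ e.erase p, x w

/-- `lam` is a signless Laplacian H-eigenvalue of the generalized power hypergraph
`G^{k,s}` (`k = 2s`) with H-eigenvector `x`. -/
def IsQHEigPow {V : Type*} [Fintype V] [DecidableEq V] (G : SimpleGraph V)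
    [DecidableRel G.Adj] (k s : ℕ) (lam : ℝ) (x : V × Fin s → ℝ) : Prop :=
  x ≠ 0 ∧ ∀ p : V × Fin s,
    lam * x p ^ (k - 1)
      = (((powerEdges G s).filter (fun e => p ∈ e)).card : ℝ) * x p ^ (k - 1)
        + ∑ e ∈ (powerEdges G s).filter (fun e => p ∈ e), ∏ w ∈ e.erase p, x w

section PowerHypergraph

variable {V : Type*} [Fintype V] [DecidableEq V] {G : SimpleGraph V} [DecidableRel G.Adj]
  {s : ℕ}

theorem mem_powerEdges {e : Finset (V × Fin s)} :
    e ∈ powerEdges G s ↔ ∃ a b, G.Adj a b ∧ e = ({a} ×ˢ univ) ∪ ({b} ×ˢ univ) := by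
  simp [powerEdges, eq_comm]

theorem exists_adj_mem_erase_of_mem_powerEdges {e : Finset (V × Fin s)}
    (he : e ∈ powerEdges G s) {p : V × Fin s} (hp : p ∈ e) :
    ∃ u, G.Adj p.1 u ∧ (u, p.2) ∈ e.erase p := by
  obtain ⟨a, b, hab, rfl⟩ := mem_powerEdges.mp he
  obtain ⟨v, i⟩ := p
  simp only [mem_union, mem_product, mem_singleton, mem_univ, and_true] at hp
  rcases hp with rfl | rfl
  · exact ⟨b, hab, by simp [hab.ne']⟩
  · exact ⟨a, hab.symm, by simp [hab.ne]⟩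

theorem IsAdjHEigPow.exists_mem_powerEdges_prod_ne_zero {k : ℕ} {lam : ℝ}
    {x : V × Fin s → ℝ} (heig : IsAdjHEigPow G k s lam x) (hlam : lam ≠ 0) {p : V × Fin s}
    (hp : x p ≠ 0) :
    ∃ e ∈ powerEdges G s, p ∈ e ∧ ∀ w ∈ e.erase p, x w ≠ 0 := by
  have hsum : ∑ e ∈ (powerEdges G s).filter (fun e => p ∈ e), ∏ w ∈ e.erase p, x w ≠ 0 := by
    rw [← heig.2 p]
    exact mul_ne_zero hlam (pow_ne_zero _ hp)
  obtain ⟨e, he, hprod⟩ := exists_ne_zero_of_sum_ne_zero hsum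
  rw [mem_filter] at he
  exact ⟨e, he.1, he.2, prod_ne_zero_iff.mp hprod⟩

end PowerHypergraph

theorem stmt8_general {V : Type*} [Fintype V] [DecidableEq V] (G : SimpleGraph V)
    [DecidableRel G.Adj] (k s : ℕ)
    (lam : ℝ) (x : V × Fin s → ℝ) (hlam : lam ≠ 0)
    (heig : IsAdjHEigPow G k s lam x) :
    ∀ v : V, (∃ i : Fin s, x (v, i) ≠ 0) →
      ∃ u : V, G.Adj v u ∧ ∃ i : Fin s, x (u, i) ≠ 0 := by
  rintro v ⟨i, hxi⟩
  obtain ⟨e, he, hpe, hnonzero⟩ := heig.exists_mem_powerEdges_prod_ne_zero hlam hxi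
  obtain ⟨u, hadj, hu⟩ := exists_adj_mem_erase_of_mem_powerEdges he hpe
  exact ⟨u, hadj, i, hnonzero _ hu⟩

/-- if `λ ≠ 0` is an adjacency H-eigenvalue of `G^{k,k/2}` with H-eigenvector
`x` and `U = {v : x is nonzero somewhere on the half edge of v}`, then every vertex of `U`
has a neighbor in `U`, i.e. `G[U]` has no isolated vertices. -/
theorem stmt8 {V : Type*} [Fintype V] [DecidableEq V] (G : SimpleGraph V)
    [DecidableRel G.Adj] (k s : ℕ) (hk : 4 ≤ k) (hks : k = 2 * s)
    (lam : ℝ) (x : V × Fin s → ℝ) (hlam : lam ≠ 0)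
    (heig : IsAdjHEigPow G k s lam x) :
    ∀ v : V, (∃ i : Fin s, x (v, i) ≠ 0) →
      ∃ u : V, G.Adj v u ∧ ∃ i : Fin s, x (u, i) ≠ 0 :=
  stmt8_general G k s lam x hlam heig
end

section
/- Let G be a finite simple graph, let k ≥ 4 be an even integer with s = k/2, and suppose λ is a signless Laplacian H-eigenvalue of the generalized power hypergraph G^{k,k/2} with H-eigenvector x, where λ ≠ deg_G(v) for every v ∈ V(G). Let U = {v ∈ V(G) : x_{(v,i)} ≠ 0 for some i ∈ {1,…,s}}. Then the vector y : U → ℝ defined by y_u = Π_{i=1}^{s} x_{(u,i)} is nonzero and satisfies Q(G)[U] y = λ y; in particular, λ is an eigenvalue of the principal submatrix Q(G)[U] of the signless Laplacian matrix of G. -/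
open Finset

/-! At a vertex `(v, i)` of `G^{2s,s}` the eigen-equation reads
`(λ - d_v) x_{v,i}^{2s-1} = (∏_{j ≠ i} x_{v,j}) · S_v` with `S_v = ∑_{u ~ v} ∏_j x_{u,j}`.
If `v ∈ U` and `λ ≠ d_v`, a single zero coordinate on the half edge of `v` would kill the right
side for a nonzero `x_{v,i}`, so all `x_{v,j}` are nonzero. Multiplying by `x_{v,i}` shows that
`x_{v,i}^{2s} = y_v S_v / (λ - d_v)` does not depend on `i`, hence `y_v^2 = x_{v,i}^{2s}` and
`(λ - d_v) y_v = S_v`. The products `∏_j x_{w,j}` vanish for `w ∉ U`, so `S_v` is the adjacency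
part of `(Q(G)[U] y)_v`. -/

theorem SimpleGraph.sum_subtype_adj_eq_sum_neighborFinset {V M : Type*} [Fintype V]
    [AddCommMonoid M] (G : SimpleGraph V) [DecidableRel G.Adj] (U : Set V) [Fintype U]
    {f : V → M} (hf : ∀ w ∉ U, f w = 0) (v : V) :
    (∑ w : U, if G.Adj v w then f w else 0) = ∑ w ∈ G.neighborFinset v, f w := by
  have hsupp (w : V) (hw : (if G.Adj v w then f w else 0) ≠ 0) : w ∈ U.toFinset :=
    Set.mem_toFinset.2 <| not_not.1 fun hwU => hw (ite_eq_right_iff.2 fun _ => hf w hwU)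
  rw [sum_set_coe (f := fun w => if G.Adj v w then f w else 0), Fintype.sum_subset hsupp,
    ← sum_filter, G.neighborFinset_eq_filter]

section RealFamily

variable {ι : Type*} [Fintype ι]

theorem sq_prod_eq_of_forall_pow_eq [Nonempty ι] {a : ι → ℝ} {c : ℝ}
    (h : ∀ i, a i ^ (2 * Fintype.card ι) = c) : (∏ i, a i) ^ 2 = c := by
  obtain ⟨i₀⟩ := ‹Nonempty ι›
  have hc : 0 ≤ c := by rw [← h i₀, pow_mul']; positivity
  refine (pow_left_inj₀ (sq_nonneg _) hc (Fintype.card_ne_zero (α := ι))).1 ?_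
  rw [← pow_mul, ← prod_pow, prod_congr rfl fun i _ => h i, prod_const, card_univ]

variable [DecidableEq ι] {a : ι → ℝ} {μ S : ℝ}

theorem ne_zero_of_mul_pow_eq_prod_erase_mul (hμ : μ ≠ 0)
    (h : ∀ i, μ * a i ^ (2 * Fintype.card ι - 1) = (∏ j ∈ univ.erase i, a j) * S)
    (ha : ∃ i, a i ≠ 0) (j : ι) : a j ≠ 0 := by
  intro hj
  obtain ⟨i, hi⟩ := ha
  have hji : j ≠ i := by rintro rfl; exact hi hj
  have hi' := h i
  rw [prod_eq_zero (mem_erase.2 ⟨hji, mem_univ j⟩) hj, zero_mul] at hi'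
  exact mul_ne_zero hμ (pow_ne_zero _ hi) hi'

theorem mul_prod_eq_of_mul_pow_eq_prod_erase_mul (hμ : μ ≠ 0)
    (h : ∀ i, μ * a i ^ (2 * Fintype.card ι - 1) = (∏ j ∈ univ.erase i, a j) * S)
    (ha : ∃ i, a i ≠ 0) : μ * ∏ i, a i = S := by
  have hprod : ∏ i, a i ≠ 0 :=
    prod_ne_zero_iff.2 fun j _ => ne_zero_of_mul_pow_eq_prod_erase_mul hμ h ha j
  have : Nonempty ι := ha.nonempty
  have hpow : ∀ i, a i ^ (2 * Fintype.card ι) = (∏ i, a i) * S / μ := by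
    intro i
    have hcard : 2 * Fintype.card ι = 2 * Fintype.card ι - 1 + 1 := by
      have := Fintype.card_pos (α := ι); omega
    rw [eq_div_iff hμ, hcard, pow_succ, ← prod_erase_mul univ a (mem_univ i)]
    linear_combination a i * h i
  have hsq := sq_prod_eq_of_forall_pow_eq hpow
  rw [eq_div_iff hμ] at hsq
  apply mul_left_cancel₀ hprod
  linear_combination hsq

end RealFamily

section PowerHypergraph

variable {V : Type*} [DecidableEq V]

def powerEdge (s : ℕ) (a b : V) : Finset (V × Fin s) :=
  ({a} ×ˢ univ) ∪ ({b} ×ˢ univ)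

theorem mem_powerEdge {s : ℕ} {a b : V} {p : V × Fin s} :
    p ∈ powerEdge s a b ↔ p.1 = a ∨ p.1 = b := by
  obtain ⟨w, j⟩ := p
  simp [powerEdge, Prod.ext_iff, eq_comm]

theorem powerEdge_comm (s : ℕ) (a b : V) : powerEdge s a b = powerEdge s b a :=
  union_comm _ _

theorem powerEdge_injOn {s : ℕ} (hs : 0 < s) (v : V) :
    Set.InjOn (powerEdge s v) {b | b ≠ v} := by
  intro a ha b _ hab
  have hmem : (a, (⟨0, hs⟩ : Fin s)) ∈ powerEdge s v b := hab ▸ mem_powerEdge.2 (Or.inr rfl)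
  exact (mem_powerEdge.1 hmem).resolve_left ha

theorem prod_erase_powerEdge {s : ℕ} (x : V × Fin s → ℝ) {u v : V} (huv : u ≠ v) (i : Fin s) :
    ∏ w ∈ (powerEdge s v u).erase (v, i), x w
      = (∏ j ∈ univ.erase i, x (v, j)) * ∏ j, x (u, j) := by
  have hdisj : Disjoint (({v} ×ˢ univ).erase (v, i)) ({u} ×ˢ (univ : Finset (Fin s))) := by
    simp only [disjoint_left, mem_erase, mem_product, mem_singleton]
    exact fun p hp hpu => huv (hpu.1.symm.trans hp.2.1)
  rw [powerEdge, erase_union_distrib, erase_eq_of_notMem (s := {u} ×ˢ univ) (by simp [huv]),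
    prod_union hdisj, ← filter_ne', ← filter_ne', prod_filter, prod_filter, prod_product,
    prod_product, prod_singleton, prod_singleton]
  simp

variable [Fintype V] (G : SimpleGraph V) [DecidableRel G.Adj]

theorem powerEdges_eq_image (s : ℕ) :
    powerEdges G s = (univ.filter fun p : V × V => G.Adj p.1 p.2).image
      fun p => powerEdge s p.1 p.2 :=
  rfl

theorem filter_mem_powerEdges (s : ℕ) (v : V) (i : Fin s) :
    (powerEdges G s).filter (fun e => (v, i) ∈ e) = (G.neighborFinset v).image (powerEdge s v) := by
  ext e
  simp only [powerEdges_eq_image, mem_filter, mem_image, mem_univ, true_and,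
    SimpleGraph.mem_neighborFinset]
  constructor
  · rintro ⟨⟨⟨a, b⟩, hab, rfl⟩, hmem⟩
    rcases mem_powerEdge.1 hmem with rfl | rfl
    · exact ⟨b, hab, rfl⟩
    · exact ⟨a, hab.symm, powerEdge_comm s _ _⟩
  · rintro ⟨u, hu, rfl⟩
    exact ⟨⟨(v, u), hu, rfl⟩, mem_powerEdge.2 (Or.inl rfl)⟩

theorem IsQHEigPow.mul_pow_eq {k s : ℕ} {lam : ℝ} {x : V × Fin s → ℝ}
    (heig : IsQHEigPow G k s lam x) (v : V) (i : Fin s) :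
    lam * x (v, i) ^ (k - 1) = G.degree v * x (v, i) ^ (k - 1)
      + (∏ j ∈ univ.erase i, x (v, j)) * ∑ u ∈ G.neighborFinset v, ∏ j, x (u, j) := by
  have hne : ∀ u ∈ G.neighborFinset v, u ≠ v := fun u hu =>
    (G.ne_of_adj ((G.mem_neighborFinset v u).1 hu)).symm
  have hinj : Set.InjOn (powerEdge s v) (G.neighborFinset v) :=
    (powerEdge_injOn i.pos v).mono hne
  rw [heig.2 (v, i), filter_mem_powerEdges, card_image_of_injOn hinj, sum_image hinj,
    G.card_neighborFinset_eq_degree, mul_sum]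
  exact congrArg _ (sum_congr rfl fun u hu => prod_erase_powerEdge x (hne u hu) i)

theorem IsQHEigPow.sub_degree_mul_pow_eq {k s : ℕ} {lam : ℝ} {x : V × Fin s → ℝ}
    (heig : IsQHEigPow G k s lam x) (hks : k = 2 * s) (v : V) (i : Fin s) :
    (lam - G.degree v) * x (v, i) ^ (2 * Fintype.card (Fin s) - 1)
      = (∏ j ∈ univ.erase i, x (v, j)) * ∑ u ∈ G.neighborFinset v, ∏ j, x (u, j) := by
  rw [Fintype.card_fin, ← hks, sub_mul, heig.mul_pow_eq]
  ring

theorem IsQHEigPow.prod_ne_zero {k s : ℕ} {lam : ℝ} {x : V × Fin s → ℝ}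
    (heig : IsQHEigPow G k s lam x) (hks : k = 2 * s) {v : V} (hlam : lam ≠ G.degree v)
    (hv : ∃ i, x (v, i) ≠ 0) : ∏ j, x (v, j) ≠ 0 :=
  prod_ne_zero_iff.2 fun j _ => ne_zero_of_mul_pow_eq_prod_erase_mul (sub_ne_zero.2 hlam)
    (heig.sub_degree_mul_pow_eq G hks v) hv j

theorem IsQHEigPow.sub_degree_mul_prod_eq {k s : ℕ} {lam : ℝ} {x : V × Fin s → ℝ}
    (heig : IsQHEigPow G k s lam x) (hks : k = 2 * s) {v : V} (hlam : lam ≠ G.degree v)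
    (hv : ∃ i, x (v, i) ≠ 0) :
    (lam - G.degree v) * ∏ j, x (v, j) = ∑ u ∈ G.neighborFinset v, ∏ j, x (u, j) :=
  mul_prod_eq_of_mul_pow_eq_prod_erase_mul (sub_ne_zero.2 hlam)
    (heig.sub_degree_mul_pow_eq G hks v) hv

end PowerHypergraph

open scoped Classical in
theorem stmt10_general {V : Type*} [Fintype V] [DecidableEq V] (G : SimpleGraph V)
    [DecidableRel G.Adj] (k s : ℕ) (hks : k = 2 * s)
    (lam : ℝ) (x : V × Fin s → ℝ) (hlam : ∀ v : V, lam ≠ (G.degree v : ℝ))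
    (heig : IsQHEigPow G k s lam x)
    (U : Set V) (hU : U = {v : V | ∃ i : Fin s, x (v, i) ≠ 0})
    (y : U → ℝ) (hy : ∀ u : U, y u = ∏ i : Fin s, x (u.1, i)) :
    y ≠ 0 ∧
      (Matrix.of fun u w : U =>
          (if (u : V) = (w : V) then (G.degree (u : V) : ℝ) else 0)
            + (if G.Adj u.1 w.1 then (1 : ℝ) else 0)).mulVec y
        = lam • y := by
  have hsupp (v : V) : v ∈ U ↔ ∃ i, x (v, i) ≠ 0 := by rw [hU]; rfl
  refine ⟨fun h0 => ?_, funext fun u => ?_⟩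
  · obtain ⟨⟨v, i⟩, hvi⟩ := Function.ne_iff.1 heig.1
    have hv : v ∈ U := (hsupp v).2 ⟨i, hvi⟩
    exact heig.prod_ne_zero G hks (hlam v) ⟨i, hvi⟩ (hy ⟨v, hv⟩ ▸ congrFun h0 ⟨v, hv⟩)
  · obtain ⟨i, hi⟩ := (hsupp u).1 u.2
    have hvanish (w : V) (hw : w ∉ U) : ∏ j, x (w, j) = 0 :=
      prod_eq_zero (mem_univ i) (not_not.1 fun h => hw ((hsupp w).2 ⟨i, h⟩))
    simp only [Matrix.mulVec, dotProduct, Matrix.of_apply, add_mul, sum_add_distrib, ite_mul,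
      one_mul, zero_mul, Subtype.coe_inj, sum_ite_eq, mem_univ, if_true, hy, Pi.smul_apply,
      smul_eq_mul, G.sum_subtype_adj_eq_sum_neighborFinset U hvanish]
    linear_combination -heig.sub_degree_mul_prod_eq G hks (hlam u) ⟨i, hi⟩

open scoped Classical in
/-- if `λ` is a signless Laplacian H-eigenvalue of `G^{k,k/2}` with
H-eigenvector `x`, `λ ≠ deg_G(v)` for every vertex `v`, and
`U = {v : x is nonzero somewhere on the half edge of v}`, then the vector
`y_u = Π_i x_{(u,i)}` on `U` is nonzero and is an eigenvector of the principal submatrix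
`Q(G)[U]` of the signless Laplacian matrix of `G` for the eigenvalue `λ`. -/
theorem stmt10 {V : Type*} [Fintype V] [DecidableEq V] (G : SimpleGraph V)
    [DecidableRel G.Adj] (k s : ℕ) (hk : 4 ≤ k) (hks : k = 2 * s)
    (lam : ℝ) (x : V × Fin s → ℝ) (hlam : ∀ v : V, lam ≠ (G.degree v : ℝ))
    (heig : IsQHEigPow G k s lam x)
    (U : Set V) (hU : U = {v : V | ∃ i : Fin s, x (v, i) ≠ 0})
    (y : U → ℝ) (hy : ∀ u : U, y u = ∏ i : Fin s, x (u.1, i)) :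
    y ≠ 0 ∧
      (Matrix.of fun u w : U =>
          (if (u : V) = (w : V) then (G.degree (u : V) : ℝ) else 0)
            + (if G.Adj u.1 w.1 then (1 : ℝ) else 0)).mulVec y
        = lam • y :=
  stmt10_general G k s hks lam x hlam heig U hU y hy
end
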